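/- arXiv:math/9910056 — 2 statements merged into one kernel-verified Lean document; each statement's English description precedes it below -/
import Mathlib

section
/- For n ≥ 2, the set Qₙ = { Σ_{i=0}^{n-1} aᵢ X^{2^i} : aᵢ ∈ F₂ } inside R_{2^n−1} = F₂[X]/(X^{2^n−1} + X + 1) is closed under composition of polynomial representatives, and (Qₙ, +, ∘) is a commutative F₂-algebra isomorphic to Rₙ = F₂[X]/(X^n + X + 1) via the linear map sending X^i to X^{2^i}. -/
/-!
Over `F₂` the Frobenius `y ↦ y²` is linear, so every `f = Σ cᵢ Xⁱ` acts on an `F₂`-algebra as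
the linearized polynomial `f(Frob) y = Σ cᵢ y^{2^i}`, and `(f g)(Frob) = f(Frob) ∘ g(Frob)`.
A root `r` of `X^{2^n-1} + X + 1` satisfies `r^{2^n} = r² + r`, i.e. `(X^n + X + 1)(Frob)` kills
`r`, so `[f] ↦ f(Frob) r` is a well-defined linear map on `Rₙ` turning products into
compositions. It sends the power basis `Xⁱ`, `i < n`, to `r^{2^i}`; these are distinct powers of
`r` below the degree `2^n - 1`, hence linearly independent, which gives injectivity and
identifies the image with `Qₙ`.
-/

open Polynomial

section Trinomial

variable {R : Type*} [CommRing R] {n : ℕ}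

theorem Polynomial.monic_X_pow_add_X_add_one (hn : 1 < n) : (X ^ n + X + 1 : R[X]).Monic := by
  rw [add_assoc]
  refine monic_X_pow_add ((degree_add_le _ _).trans_lt
    (max_lt (degree_X_le.trans_lt ?_) (degree_one_le.trans_lt ?_))) <;> exact_mod_cast by omega

theorem Polynomial.natDegree_X_pow_add_X_add_one [Nontrivial R] (hn : 1 < n) :
    (X ^ n + X + 1 : R[X]).natDegree = n := by
  compute_degree!
  · simp [hn.ne, show n ≠ 0 by omega]
  · omega

end Trinomial

namespace AdjoinRoot

section AevalApply

variable {R M : Type*} [CommRing R] [AddCommGroup M] [Module R M] {p : R[X]}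

/-- `[f] ↦ f(φ) r`; this is independent of the representative `f` only when
`aeval φ p r = 0`. -/
noncomputable def aevalApply (hp : p.Monic) (φ : Module.End R M) (r : M) :
    AdjoinRoot p →ₗ[R] M :=
  LinearMap.applyₗ r ∘ₗ (aeval φ).toLinearMap ∘ₗ modByMonicHom hp

variable {hp : p.Monic} {φ : Module.End R M} {r : M}

theorem aevalApply_mk (hr : aeval φ p r = 0) (f : R[X]) :
    aevalApply hp φ r (mk p f) = aeval φ f r := by
  have hmul : aeval φ (p * (f /ₘ p)) r = 0 := by
    rw [mul_comm, map_mul, Module.End.mul_apply, hr, map_zero]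
  calc aevalApply hp φ r (mk p f) = aeval φ (f %ₘ p) r :=
        congrArg (aeval φ · r) (modByMonicHom_mk hp f)
    _ = aeval φ f r := by
        conv_rhs => rw [← modByMonic_add_div f p]
        rw [map_add, LinearMap.add_apply, hmul, add_zero]

theorem aevalApply_mk_mul (hr : aeval φ p r = 0) (f : R[X]) (b : AdjoinRoot p) :
    aevalApply hp φ r (mk p f * b) = aeval φ f (aevalApply hp φ r b) := by
  obtain ⟨g, rfl⟩ := mk_surjective b
  rw [← map_mul, aevalApply_mk hr, aevalApply_mk hr, map_mul, Module.End.mul_apply]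

theorem aevalApply_root_pow (hr : aeval φ p r = 0) (i : ℕ) :
    aevalApply hp φ r (root p ^ i) = (φ ^ i) r := by
  rw [← mk_X, ← map_pow, aevalApply_mk hr, map_pow, aeval_X]

theorem aevalApply_eq_constr (hr : aeval φ p r = 0) :
    aevalApply hp φ r =
      (powerBasis' hp).basis.constr R fun i : Fin (powerBasis' hp).dim => (φ ^ (i : ℕ)) r :=
  (powerBasis' hp).basis.ext fun i => by
    rw [Module.Basis.constr_basis, PowerBasis.basis_eq_pow, powerBasis'_gen,
      aevalApply_root_pow hr]

theorem injective_aevalApply (hr : aeval φ p r = 0)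
    (hli : LinearIndependent R fun i : Fin p.natDegree => (φ ^ (i : ℕ)) r) :
    Function.Injective (aevalApply hp φ r) := by
  rw [aevalApply_eq_constr hr]
  exact Module.Basis.injective_constr_of_linearIndependent _ hli

theorem range_aevalApply (hr : aeval φ p r = 0) :
    LinearMap.range (aevalApply hp φ r) =
      Submodule.span R {x | ∃ i < p.natDegree, x = (φ ^ i) r} := by
  rw [aevalApply_eq_constr hr, Module.Basis.constr_range]
  congr 1
  ext x
  exact ⟨fun ⟨i, hi⟩ => ⟨i, i.2, hi.symm⟩, fun ⟨i, hi, hx⟩ => ⟨⟨i, hi⟩, hx.symm⟩⟩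

end AevalApply

theorem linearIndependent_root_pow {R ι : Type*} [CommRing R] {g : R[X]} (hg : g.Monic)
    {k : ι → ℕ} (hk : Function.Injective k) (hlt : ∀ i, k i < g.natDegree) :
    LinearIndependent R fun i => root g ^ k i := by
  have := (powerBasis' hg).basis.linearIndependent.comp (fun i => ⟨k i, hlt i⟩)
    fun a b h => hk (congrArg Fin.val h)
  simpa [Function.comp_def, PowerBasis.basis_eq_pow] using this

theorem root_X_pow_add_X_add_one {R : Type*} [CommRing R] (m : ℕ) :
    root (X ^ m + X + 1 : R[X]) ^ m + root (X ^ m + X + 1 : R[X]) + 1 = 0 := by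
  have h := eval₂_root (X ^ m + X + 1 : R[X])
  simpa only [eval₂_add, eval₂_X_pow, eval₂_X, eval₂_one] using h

theorem linearIndependent_root_pow_two_pow {R : Type*} [CommRing R] [Nontrivial R] {n : ℕ}
    (hn : 2 ≤ n) :
    LinearIndependent R fun i : Fin n => root (X ^ (2 ^ n - 1) + X + 1 : R[X]) ^ 2 ^ (i : ℕ) := by
  have h4 : 2 ^ 2 ≤ 2 ^ n := Nat.pow_le_pow_right two_pos hn
  refine linearIndependent_root_pow (monic_X_pow_add_X_add_one (by omega))
    (fun i j h => Fin.ext (Nat.pow_right_injective le_rfl h)) fun i => ?_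
  have hi : 2 ^ ((i : ℕ) + 1) ≤ 2 ^ n := Nat.pow_le_pow_right two_pos i.2
  rw [natDegree_X_pow_add_X_add_one (by omega)]
  omega

end AdjoinRoot

namespace FiniteField

variable {K L : Type*} [Field K] [Fintype K] [CommRing L] [Algebra K L]

theorem frobeniusAlgHom_pow_apply (i : ℕ) (y : L) :
    ((frobeniusAlgHom K L).toLinearMap ^ i) y = y ^ Fintype.card K ^ i := by
  rw [Module.End.pow_apply]
  exact congrFun (pow_iterate _ i) y

end FiniteField

theorem aeval_frobenius_X_pow_add_X_add_one {L : Type*} [CommRing L] [Algebra (ZMod 2) L]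
    {n : ℕ} {r : L} (hr : r ^ (2 ^ n - 1) + r + 1 = 0) :
    aeval (FiniteField.frobeniusAlgHom (ZMod 2) L).toLinearMap (X ^ n + X + 1 : (ZMod 2)[X]) r
      = 0 := by
  have h : r ^ 2 ^ n = r ^ (2 ^ n - 1) * r := by
    rw [← pow_succ, Nat.sub_add_cancel Nat.one_le_two_pow]
  simp only [map_add, map_pow, aeval_X, map_one, LinearMap.add_apply, Module.End.one_apply,
    FiniteField.frobeniusAlgHom_pow_apply, AlgHom.toLinearMap_apply,
    FiniteField.frobeniusAlgHom_apply, ZMod.card]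
  linear_combination r * hr + h

/-- For `n ≥ 2`, inside `R_{2^n−1} = F₂[X]/(X^{2^n−1} + X + 1)`, the span `Qₙ` of the
`X^{2^i}` for `i < n` carries a commutative `F₂`-algebra structure where multiplication is
composition of the representing 2-polynomials, and this algebra is isomorphic to
`Rₙ = F₂[X]/(X^n + X + 1)` via the linear map sending `X^i` to `X^{2^i}`. -/
theorem stmt_9 (n : ℕ) (hn : 2 ≤ n) :
    ∃ e : AdjoinRoot (X ^ n + X + 1 : (ZMod 2)[X]) →ₗ[ZMod 2]
          AdjoinRoot (X ^ (2 ^ n - 1) + X + 1 : (ZMod 2)[X]),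
      Function.Injective e ∧
      -- the image of `e` is exactly `Qₙ`, the span of the `X^{2^i}` for `i < n`
      LinearMap.range e = Submodule.span (ZMod 2)
        {x | ∃ i < n, x = (AdjoinRoot.root (X ^ (2 ^ n - 1) + X + 1 : (ZMod 2)[X])) ^ 2 ^ i} ∧
      -- `e` sends `X^i` to `X^{2^i}`
      (∀ i : ℕ, e ((AdjoinRoot.root (X ^ n + X + 1 : (ZMod 2)[X])) ^ i) =
        (AdjoinRoot.root (X ^ (2 ^ n - 1) + X + 1 : (ZMod 2)[X])) ^ 2 ^ i) ∧
      -- `e` turns multiplication in `Rₙ` into composition of 2-polynomial representatives: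
      -- if `a = mk f` with `f = Σ cᵢ Xⁱ`, then `e (a * b) = Σ cᵢ (e b)^{2^i} = f̂ ∘ (e b)`
      (∀ f : (ZMod 2)[X], ∀ b : AdjoinRoot (X ^ n + X + 1 : (ZMod 2)[X]),
        e (AdjoinRoot.mk (X ^ n + X + 1 : (ZMod 2)[X]) f * b) =
          f.sum fun i c => c • (e b) ^ 2 ^ i) := by
  have hr := aeval_frobenius_X_pow_add_X_add_one
    (AdjoinRoot.root_X_pow_add_X_add_one (R := ZMod 2) (2 ^ n - 1))
  refine ⟨AdjoinRoot.aevalApply (monic_X_pow_add_X_add_one hn) _ _,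
    AdjoinRoot.injective_aevalApply hr ?_, ?_, fun i => ?_, fun f b => ?_⟩
  · rw [natDegree_X_pow_add_X_add_one hn]
    simpa only [FiniteField.frobeniusAlgHom_pow_apply, ZMod.card]
      using AdjoinRoot.linearIndependent_root_pow_two_pow hn
  · rw [AdjoinRoot.range_aevalApply hr, natDegree_X_pow_add_X_add_one hn]
    simp only [FiniteField.frobeniusAlgHom_pow_apply, ZMod.card]
  · rw [AdjoinRoot.aevalApply_root_pow hr, FiniteField.frobeniusAlgHom_pow_apply, ZMod.card]
  · rw [AdjoinRoot.aevalApply_mk_mul hr, aeval_endomorphism]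
    simp only [FiniteField.frobeniusAlgHom_pow_apply, ZMod.card]
end

section
/- If f is an irreducible factor of X^n + X + 1 over F₂ and f̂ is its hat-polynomial, then f̂/X divides X^{2^n − 1} + X + 1 in F₂[X]. -/
/-!
The map `f ↦ f̂` is additive, and multiplying `f` by `X` squares `f̂`; since squaring is additive
in characteristic two, this gives `(f * g)^ = f̂.comp ĝ`. Writing `f̂ = X * q` and `ĝ = X * q'`,
a factorization `X ^ n + X + 1 = f * g` becomes
`X * (X ^ (2 ^ n - 1) + X + 1) = ĝ.comp f̂ = X * q * q'.comp (X * q)`, and cancelling `X` leaves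
a multiple of `q`.
-/

open Polynomial

/-- The hat-polynomial (linearized polynomial) of `f = Σ aᵢ Xⁱ` is `f̂ = Σ aᵢ X^(2^i)`. -/
noncomputable def hat (f : (ZMod 2)[X]) : (ZMod 2)[X] :=
  f.sum fun i a => C a * X ^ 2 ^ i

lemma hat_add (f g : (ZMod 2)[X]) : hat (f + g) = hat f + hat g := by
  unfold hat
  rw [sum_add_index] <;> intros <;> simp [add_mul]

lemma hat_monomial (k : ℕ) (a : ZMod 2) : hat (monomial k a) = C a * X ^ 2 ^ k := by
  simp [hat, sum_monomial_index]

lemma hat_X_pow (k : ℕ) : hat (X ^ k : (ZMod 2)[X]) = X ^ 2 ^ k := by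
  rw [← monomial_one_right_eq_X_pow, hat_monomial, C_1, one_mul]

lemma hat_one : hat (1 : (ZMod 2)[X]) = X := by
  simpa using hat_X_pow 0

lemma hat_X : hat (X : (ZMod 2)[X]) = X ^ 2 := by
  simpa using hat_X_pow 1

lemma hat_C_mul (a : ZMod 2) (f : (ZMod 2)[X]) : hat (C a * f) = C a * hat f := by
  obtain rfl | rfl : a = 0 ∨ a = 1 := by decide +revert
  all_goals simp [hat]

lemma hat_X_mul (g : (ZMod 2)[X]) : hat (X * g) = hat g ^ 2 := by
  induction g using Polynomial.induction_on' with
  | add p q hp hq => rw [mul_add, hat_add, hp, hq, hat_add, add_pow_char]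
  | monomial k a =>
      rw [X_mul_monomial, hat_monomial, hat_monomial, mul_pow, ← C_pow, ZMod.pow_card, ← pow_mul,
        pow_succ]

lemma hat_X_pow_mul (k : ℕ) (g : (ZMod 2)[X]) : hat (X ^ k * g) = hat g ^ 2 ^ k := by
  induction k with
  | zero => simp
  | succ k ih => rw [pow_succ', mul_assoc, hat_X_mul, ih, ← pow_mul, pow_succ]

theorem hat_mul (f g : (ZMod 2)[X]) : hat (f * g) = (hat f).comp (hat g) := by
  induction f using Polynomial.induction_on' with
  | add p q hp hq => rw [add_mul, hat_add, hp, hq, hat_add, add_comp]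
  | monomial k a =>
      rw [← C_mul_X_pow_eq_monomial, mul_assoc, hat_C_mul, hat_X_pow_mul, hat_C_mul, hat_X_pow,
        mul_comp, C_comp, pow_comp, X_comp]

lemma X_dvd_hat (f : (ZMod 2)[X]) : X ∣ hat f :=
  Finset.dvd_sum fun i _ => (dvd_pow_self X (pow_ne_zero i two_ne_zero)).mul_left _

theorem hat_div_X_dvd_of_dvd {f h q r : (ZMod 2)[X]} (hfh : f ∣ h) (hq : hat f = X * q)
    (hr : hat h = X * r) : q ∣ r := by
  obtain ⟨g, rfl⟩ := hfh
  obtain ⟨q', hq'⟩ := X_dvd_hat g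
  have hcomp : X * r = X * (q * q'.comp (X * q)) := by
    rw [← hr, mul_comm, hat_mul, hq', hq, mul_comp, X_comp, mul_assoc]
  exact ⟨q'.comp (X * q), mul_left_cancel₀ X_ne_zero hcomp⟩

lemma hat_X_pow_add_X_add_one (n : ℕ) :
    hat (X ^ n + X + 1 : (ZMod 2)[X]) = X * (X ^ (2 ^ n - 1) + X + 1) := by
  rw [hat_add, hat_add, hat_X_pow, hat_X, hat_one, mul_add, mul_add, ← pow_succ',
    Nat.sub_add_cancel Nat.one_le_two_pow, sq, mul_one]

theorem stmt_19_general (n : ℕ) (f : (ZMod 2)[X])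
    (hdvd : f ∣ X ^ n + X + 1) :
    ∃ q : (ZMod 2)[X], hat f = X * q ∧ q ∣ X ^ (2 ^ n - 1) + X + 1 := by
  obtain ⟨q, hq⟩ := X_dvd_hat f
  exact ⟨q, hq, hat_div_X_dvd_of_dvd hdvd hq (hat_X_pow_add_X_add_one n)⟩

theorem stmt_19 (n : ℕ) (hn : 2 ≤ n) (f : (ZMod 2)[X]) (hirr : Irreducible f)
    (hdvd : f ∣ X ^ n + X + 1) :
    ∃ q : (ZMod 2)[X], hat f = X * q ∧ q ∣ X ^ (2 ^ n - 1) + X + 1 :=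
  stmt_19_general n f hdvd
end
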